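/- arXiv:1907.05215 — 2 statements merged into one kernel-verified Lean document; each statement's English description precedes it below -/
import Mathlib

section
/- Let E be a row-finite directed graph without sinks. If E satisfies Condition (DI), then E satisfies Condition (I). -/
variable {V E : Type}

/-- A finite path in a directed graph with source map `s` and target map `t`.
Paths of length 0 are identified with their source vertex. -/
structure FPath (s t : E → V) : Type where
  src : V
  edges : List E
  chain : edges.Chain' (fun e f => t e = s f)
  head_src : ∀ e ∈ edges.head?, s e = src

namespace FPath

variable {s t : E → V}

/-- The terminal vertex of a finite path. -/
def trg (p : FPath s t) : V := (p.edges.getLast?).elim p.src t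

/-- The length-zero path at a vertex. -/
def ofVertex (s t : E → V) (v : V) : FPath s t :=
  ⟨v, [], List.IsChain.nil, by simp⟩

end FPath

/-- `x : ℕ → E` is an infinite path when consecutive edges match up. -/
def IsInfPath (s t : E → V) (x : ℕ → E) : Prop := ∀ i, t (x i) = s (x (i + 1))

/-- The infinite path space `E^∞`. -/
abbrev InfPath (s t : E → V) : Type := {x : ℕ → E // IsInfPath s t x}

/-- The cylinder set `Z(p)` of a finite path `p`. -/
def Cyl (s t : E → V) (p : FPath s t) : Set (InfPath s t) :=
  {x | s (x.1 0) = p.src ∧ ∀ (i : ℕ) (h : i < p.edges.length), x.1 i = p.edges[i]'h}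

/-- The cylinder set `Z(v)` of a vertex: all infinite paths starting at `v`. -/
def CylV (s t : E → V) (v : V) : Set (InfPath s t) := {x | s (x.1 0) = v}

/-- A graph is row-finite when each vertex emits finitely many edges. -/
def RowFinite (s : E → V) : Prop := ∀ v : V, {e : E | s e = v}.Finite

/-- A graph has no sinks when each vertex emits at least one edge. -/
def NoSinks (s : E → V) : Prop := ∀ v : V, ∃ e : E, s e = v

/-- `Reach s t v w` : there is a finite path (possibly empty) from `v` to `w`. -/
def Reach (s t : E → V) (v w : V) : Prop := ∃ p : FPath s t, p.src = v ∧ p.trg = w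

/-- A cycle (loop): a nonempty finite path returning to its source. -/
def IsCycle {s t : E → V} (p : FPath s t) : Prop := p.edges ≠ [] ∧ p.trg = p.src

/-- A cycle that visits its base only at the start and the end. -/
def IsStrictCycle {s t : E → V} (p : FPath s t) : Prop :=
  IsCycle p ∧ ∀ (i : ℕ) (h : i < p.edges.length), 0 < i → s (p.edges[i]'h) ≠ p.src

/-- The vertices visited by a finite path. -/
def OnPath {s t : E → V} (p : FPath s t) (u : V) : Prop :=
  u = p.src ∨ ∃ e ∈ p.edges, t e = u

/-- `V^2` : vertices which are the base of at least two distinct cycles. -/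
def V2set (s t : E → V) : Set V :=
  {v | ∃ p q : FPath s t, p.src = v ∧ q.src = v ∧ IsStrictCycle p ∧ IsStrictCycle q ∧
    p.edges ≠ q.edges}

/-- `V^1` : vertices which are the base of exactly one cycle. -/
def V1set (s t : E → V) : Set V :=
  {v | ∃! l : List E, ∃ p : FPath s t, p.src = v ∧ IsStrictCycle p ∧ p.edges = l}

/-- Condition (K): no vertex is the base of exactly one cycle. -/
def CondK (s t : E → V) : Prop := V1set s t = ∅

/-- Vertices which lie on a loop (cycle). -/
def OnLoop (s t : E → V) : Set V :=
  {u | ∃ p : FPath s t, IsCycle p ∧ OnPath p u}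

/-- The path `p` passes through a vertex of the set `S`. -/
def Passes {s t : E → V} (p : FPath s t) (S : Set V) : Prop := ∃ u ∈ S, OnPath p u

/-- `B` is a finite decomposition of `Z(v)` into disjoint cylinder sets of paths from `v`. -/
def Decomp (s t : E → V) (v : V) (B : List (FPath s t)) : Prop :=
  (∀ β ∈ B, β.src = v) ∧
  (⋃ β ∈ B, Cyl s t β) = CylV s t v ∧
  (B.map (Cyl s t)).Pairwise Disjoint

/-- Condition (I). -/
def CondI (s t : E → V) : Prop :=
  ∀ v : V, ∃ α : FPath s t, α.src = v ∧ α.trg ∈ V2set s t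

/-- Condition (DI). -/
def CondDI (s t : E → V) : Prop :=
  ∀ v : V, ∃ B : List (FPath s t), Decomp s t v B ∧
    ∀ β ∈ B, ∃ α : FPath s t, α.src = v ∧ α.trg = β.trg ∧ Passes α (V2set s t)

/-- Condition (DL). -/
def CondDL (s t : E → V) : Prop :=
  ∀ v : V, ∃ B : List (FPath s t), Decomp s t v B ∧
    ∀ β ∈ B, ∃ α : FPath s t, α.src = v ∧ α.trg = β.trg ∧ Passes α (OnLoop s t)

/-- `Z(μ)` is `(G^a,2,1)`-paradoxical: two families of pairs of finite paths
`(α_i, β_i)` and `(γ_j, δ_j)` with `t(α)=t(β)`, the cylinders of the second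
coordinates each covering `Z(μ)`, and the cylinders of the first coordinates
pairwise disjoint subsets of `Z(μ)`. -/
def Paradoxical (s t : E → V) (μ : FPath s t) : Prop :=
  ∃ A C : List (FPath s t × FPath s t),
    (∀ q ∈ A ++ C, q.1.trg = q.2.trg ∧ Cyl s t q.1 ⊆ Cyl s t μ) ∧
    (⋃ q ∈ A, Cyl s t q.2) = Cyl s t μ ∧
    (⋃ q ∈ C, Cyl s t q.2) = Cyl s t μ ∧
    ((A ++ C).map (fun q => Cyl s t q.1)).Pairwise Disjoint

/-- Paradoxicality of the cylinder set `Z(v)` of a vertex. -/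
def ParadoxicalV (s t : E → V) (v : V) : Prop := Paradoxical s t (FPath.ofVertex s t v)

/-- A maximal tail. -/
def MaximalTail (s t : E → V) (M : Set V) : Prop :=
  M.Nonempty ∧
  (∀ v w : V, Reach s t v w → w ∈ M → v ∈ M) ∧
  (∀ v ∈ M, (∃ e : E, s e = v) → ∃ e : E, s e = v ∧ t e ∈ M) ∧
  (∀ v ∈ M, ∀ w ∈ M, ∃ y ∈ M, Reach s t v y ∧ Reach s t w y)

/-- The shift map on the infinite path space. -/
def shiftMap (s t : E → V) (x : InfPath s t) : InfPath s t :=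
  ⟨fun i => x.1 (i + 1), fun i => x.2 (i + 1)⟩

/-- The cylinder set of a single edge. -/
def edgeCyl (s t : E → V) (e : E) : Set (InfPath s t) := {x | x.1 0 = e}

/-- Eventual periodicity of an infinite sequence of edges. -/
def EvPeriodic (x : ℕ → E) : Prop := ∃ N p : ℕ, 1 ≤ p ∧ ∀ i, N ≤ i → x (i + p) = x i

/-- A cycle has an exit. -/
def HasExit {s t : E → V} (c : FPath s t) : Prop :=
  ∃ (i : ℕ) (h : i < c.edges.length) (e : E),
    e ≠ c.edges[i]'h ∧ s e = s (c.edges[i]'h)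

/-- The length-one path consisting of a single edge. -/
def path1 (s t : E → V) (w : V) (a : E) (h : s a = w) : FPath s t :=
  ⟨w, [a], List.IsChain.singleton a, by simp [h]⟩

/-- The length-two path consisting of two composable edges. -/
def path2 (s t : E → V) (w : V) (a b : E) (ha : s a = w) (hab : t a = s b) : FPath s t :=
  ⟨w, [a, b], List.IsChain.cons_cons hab (List.IsChain.singleton b), by simp [ha]⟩

/-- Auxiliary: if `u` lies on path `p`, there is a path from `p.src` to `u`. -/
theorem exists_prefix_path {s t : E → V} (p : FPath s t) (u : V) (h : OnPath p u) :
    ∃ q : FPath s t, q.src = p.src ∧ q.trg = u := by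
  rcases h with rfl | ⟨e, he, rfl⟩
  · exact ⟨FPath.ofVertex s t p.src, rfl, rfl⟩
  · obtain ⟨i, hi, rfl⟩ := List.getElem_of_mem he
    refine ⟨⟨p.src, p.edges.take (i + 1), p.chain.take _, ?_⟩, rfl, ?_⟩
    · have key : ∀ (l : List E) (n : ℕ) (e' : E), e' ∈ (l.take n).head? → e' ∈ l.head? := by
        rintro (_ | ⟨a, l⟩) (_ | n) e' h' <;> simpa using h'
      intro e' he'
      exact p.head_src e' (key _ _ _ he')
    · show (List.getLast? _).elim _ _ = _
      have : (p.edges.take (i + 1)).getLast? = some (p.edges[i]'hi) := by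
        rw [List.getLast?_eq_getElem?]
        simp [List.length_take, Nat.succ_le_of_lt hi, List.getElem?_take,
          Nat.lt_succ_self, hi]
      rw [this]
      rfl

/-- Auxiliary: in a graph without sinks, each vertex emits an infinite path. -/
theorem exists_infPath (s t : E → V) (hns : NoSinks s) (v : V) :
    ∃ x : InfPath s t, s (x.1 0) = v := by
  choose f hf using hns
  refine ⟨⟨fun i => (fun e => f (t e))^[i] (f v), fun i => ?_⟩, ?_⟩
  · dsimp only
    rw [Function.iterate_succ_apply']
    exact (hf _).symm
  · simpa using hf v

/-- for a row-finite graph without sinks, Condition (DI) implies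
Condition (I). -/
theorem stmt6 (s t : E → V) (hrf : RowFinite s) (hns : NoSinks s)
    (h : CondDI s t) : CondI s t := by
  intro v
  obtain ⟨B, ⟨hsrc, hcov, hdisj⟩, hB⟩ := h v
  obtain ⟨x, hx⟩ := exists_infPath s t hns v
  have hx' : x ∈ ⋃ β ∈ B, Cyl s t β := by rw [hcov]; exact hx
  obtain ⟨β, hβB, -⟩ := Set.mem_iUnion₂.1 hx'
  obtain ⟨α, hα1, -, u, hu, hupath⟩ := hB β hβB
  obtain ⟨q, hq1, hq2⟩ := exists_prefix_path α u hupath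
  exact ⟨q, hq1.trans hα1, hq2 ▸ hu⟩
end

section
/- Let E be a row-finite directed graph without sinks, and suppose some vertex v does not satisfy Condition (DL) at v, i.e., there is no finite disjoint decomposition Z(v) = ⊔ Z(β_i) with paths α_i from v to t(β_i) passing through a loop. Then there exists an infinite path x starting at v such that for no n does there exist a finite path from v through a vertex on a cycle to t(x_n). Consequently, M = { u ∈ E^0 : u ≥ t(x_n) for some n } is a maximal tail in which v does not connect to any loop. -/
variable {V E : Type}

section Aux

variable {s t : E → V}

namespace FPath

theorem ext' {p q : FPath s t} (h1 : p.src = q.src) (h2 : p.edges = q.edges) :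
    p = q := by
  cases p; cases q; simp_all

theorem trg_of_nil {p : FPath s t} (h : p.edges = []) : p.trg = p.src := by
  simp [trg, h]

theorem trg_of_last {p : FPath s t} {e : E} (h : p.edges.getLast? = some e) :
    p.trg = t e := by simp [trg, h]

/-- Concatenation of composable finite paths. -/
def comp (p q : FPath s t) (h : p.trg = q.src) : FPath s t where
  src := p.src
  edges := p.edges ++ q.edges
  chain := by
    show List.IsChain _ _
    rw [List.isChain_append]
    refine ⟨p.chain, q.chain, ?_⟩
    intro a ha b hb
    rw [q.head_src b hb, ← h, trg_of_last ha]
  head_src := by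
    intro e he
    rcases hp : p.edges with _ | ⟨a, l⟩
    · simp [hp] at he
      rw [q.head_src e he, ← h, trg_of_nil hp]
    · rw [hp] at he; simp at he
      exact he ▸ p.head_src a (by simp [hp])

@[simp] theorem src_comp (p q : FPath s t) (h : p.trg = q.src) :
    (comp p q h).src = p.src := rfl

@[simp] theorem edges_comp (p q : FPath s t) (h : p.trg = q.src) :
    (comp p q h).edges = p.edges ++ q.edges := rfl

@[simp] theorem trg_comp (p q : FPath s t) (h : p.trg = q.src) :
    (comp p q h).trg = q.trg := by
  rcases hq : q.edges with _ | ⟨a, l⟩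
  · rw [trg_of_nil hq, ← h]
    show (p.edges ++ q.edges).getLast?.elim p.src t = p.trg
    rw [hq, List.append_nil]; rfl
  · have hl : (a :: l).getLast? = some ((a :: l).getLast (by simp)) :=
      List.getLast?_eq_getLast (by simp)
    have e1 : q.trg = t ((a :: l).getLast (by simp)) := trg_of_last (by rw [hq, hl])
    have e2 : (comp p q h).trg = t ((a :: l).getLast (by simp)) := by
      apply trg_of_last
      show (p.edges ++ q.edges).getLast? = _
      rw [hq, List.getLast?_append, hl]
      rfl
    rw [e1, e2]

/-- The path obtained by dropping the first edge. -/
def tail (p : FPath s t) (e : E) (rest : List E) (h : p.edges = e :: rest) :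
    FPath s t where
  src := t e
  edges := rest
  chain := (List.isChain_cons.mp (h ▸ p.chain)).2
  head_src := fun f hf => ((List.isChain_cons.mp (h ▸ p.chain)).1 f hf).symm

theorem trg_tail (p : FPath s t) (e : E) (rest : List E) (h : p.edges = e :: rest) :
    (tail p e rest h).trg = p.trg := by
  rcases rest with _ | ⟨a, l⟩
  · rw [trg_of_nil rfl, trg_of_last (show p.edges.getLast? = some e by rw [h]; rfl)]
    rfl
  · show ((a :: l).getLast?).elim (t e) t = (p.edges.getLast?).elim p.src t
    rw [h, List.getLast?_cons_cons]
    have hl : (a :: l).getLast? = some ((a :: l).getLast (by simp)) :=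
      List.getLast?_eq_getLast (by simp)
    rw [hl]
    rfl

theorem src_tail_of_edge (p : FPath s t) (e : E) (rest : List E)
    (h : p.edges = e :: rest) : s e = p.src :=
  p.head_src e (by simp [h])

open Classical in
noncomputable def cons' (e : E) (q : FPath s t) : FPath s t :=
  if h : t e = q.src then
    ⟨s e, e :: q.edges, List.isChain_cons.mpr
      ⟨fun f hf => (q.head_src f hf).symm ▸ h, q.chain⟩,
      by intro f hf; simp at hf; rw [hf]⟩
  else q

theorem trg_onPath (p : FPath s t) : OnPath p p.trg := by
  rcases hp : p.edges with _ | ⟨a, l⟩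
  · exact Or.inl (trg_of_nil hp)
  · refine Or.inr ⟨p.edges.getLast (by simp [hp]), List.getLast_mem _, ?_⟩
    exact (trg_of_last (List.getLast?_eq_getLast _)).symm

theorem onPath_comp_left {p : FPath s t} (q : FPath s t) (h : p.trg = q.src)
    {u : V} (hu : OnPath p u) : OnPath (comp p q h) u := by
  rcases hu with hu | ⟨e, he, hte⟩
  · exact Or.inl hu
  · exact Or.inr ⟨e, by simp [he], hte⟩

end FPath

theorem Reach.refl' (s t : E → V) (w : V) : Reach s t w w :=
  ⟨FPath.ofVertex s t w, rfl, rfl⟩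

theorem Reach.trans' {u w y : V} (h1 : Reach s t u w) (h2 : Reach s t w y) :
    Reach s t u y := by
  obtain ⟨p, hp1, hp2⟩ := h1
  obtain ⟨q, hq1, hq2⟩ := h2
  exact ⟨FPath.comp p q (hp2.trans hq1.symm), hp1, by simp [hq2]⟩

theorem reach_of_edge {e : E} {w : V} (h : s e = w) : Reach s t w (t e) :=
  ⟨path1 s t w e h, rfl, by simp [FPath.trg, path1]⟩

theorem reach_cases {u w : V} (h : Reach s t u w) :
    u = w ∨ ∃ e : E, s e = u ∧ Reach s t (t e) w := by
  obtain ⟨p, hp1, hp2⟩ := h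
  rcases hp : p.edges with _ | ⟨e, rest⟩
  · exact Or.inl (by rw [← hp1, ← hp2, FPath.trg_of_nil hp])
  · refine Or.inr ⟨e, hp1 ▸ FPath.src_tail_of_edge p e rest hp, ?_⟩
    exact ⟨FPath.tail p e rest hp, rfl, (FPath.trg_tail p e rest hp).trans hp2⟩

/-- `CleanAt v w` : there is no path from `v` to `w` passing through a loop. -/
def CleanAt (s t : E → V) (v w : V) : Prop :=
  ¬ ∃ α : FPath s t, α.src = v ∧ α.trg = w ∧ Passes α (OnLoop s t)

theorem not_cleanAt_mono {v w u : V} (h : ¬ CleanAt s t v w)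
    (hr : Reach s t w u) : ¬ CleanAt s t v u := by
  rw [CleanAt, not_not] at h ⊢
  obtain ⟨α, h1, h2, x, hx1, hx2⟩ := h
  obtain ⟨p, hp1, hp2⟩ := hr
  refine ⟨FPath.comp α p (h2.trans hp1.symm), h1, by simp [hp2], x, hx1,
    FPath.onPath_comp_left p _ hx2⟩

/-- `Alive v w` : arbitrarily long paths from `w` ending at a vertex clean for `v`. -/
def Alive (s t : E → V) (v w : V) : Prop :=
  ∀ n : ℕ, ∃ p : FPath s t, p.src = w ∧ n ≤ p.edges.length ∧ CleanAt s t v p.trg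

theorem Alive.cleanAt {v w : V} (h : Alive s t v w) : CleanAt s t v w := by
  obtain ⟨p, hp1, -, hp3⟩ := h 0
  by_contra hc
  exact not_cleanAt_mono hc ⟨p, hp1, rfl⟩ hp3

theorem FPath.cons'_eq (p : FPath s t) (e : E) (rest : List E)
    (h : p.edges = e :: rest) : p = FPath.cons' e (p.tail e rest h) := by
  unfold FPath.cons'
  rw [dif_pos (show t e = (p.tail e rest h).src from rfl)]
  exact FPath.ext' (FPath.src_tail_of_edge p e rest h).symm h

/-- The prefix of length `n` of an infinite path. -/
def prefixPath (x : InfPath s t) (n : ℕ) : FPath s t where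
  src := s (x.1 0)
  edges := List.ofFn (fun i : Fin n => x.1 i)
  chain := by
    show List.IsChain _ _
    rw [List.isChain_iff_getElem]
    intro i hi
    simp only [List.length_ofFn] at hi
    simp only [List.getElem_ofFn]
    exact x.2 i
  head_src := by
    intro e he
    cases n with
    | zero => simp at he
    | succ m =>
      rw [List.ofFn_succ] at he
      simp only [List.head?_cons, Option.mem_def, Option.some.injEq] at he
      rw [← he]
      rfl

@[simp] theorem prefixPath_src (x : InfPath s t) (n : ℕ) :
    (prefixPath x n).src = s (x.1 0) := rfl

@[simp] theorem prefixPath_length (x : InfPath s t) (n : ℕ) :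
    (prefixPath x n).edges.length = n := by simp [prefixPath]

theorem finite_fixed_length (hrf : RowFinite s) :
    ∀ n : ℕ, ∀ w : V, {p : FPath s t | p.src = w ∧ p.edges.length = n}.Finite := by
  intro n
  induction n with
  | zero =>
    intro w
    apply Set.Finite.subset (Set.finite_singleton (FPath.ofVertex s t w))
    rintro p ⟨h1, h2⟩
    exact Set.mem_singleton_iff.mpr (FPath.ext' h1 (List.length_eq_zero_iff.mp h2))
  | succ n ih =>
    intro w
    have hsub : {p : FPath s t | p.src = w ∧ p.edges.length = n + 1} ⊆
        ⋃ e ∈ {e : E | s e = w}, FPath.cons' e ''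
          {q : FPath s t | q.src = t e ∧ q.edges.length = n} := by
      rintro p ⟨h1, h2⟩
      rcases hp : p.edges with _ | ⟨e, rest⟩
      · rw [hp] at h2; simp at h2
      · refine Set.mem_biUnion
          (show s e = w from h1 ▸ FPath.src_tail_of_edge p e rest hp) ?_
        refine ⟨p.tail e rest hp, ⟨rfl, ?_⟩, (FPath.cons'_eq p e rest hp).symm⟩
        have h2' := h2
        rw [hp] at h2'
        simpa [FPath.tail] using h2'
    exact Set.Finite.subset
      (Set.Finite.biUnion (hrf w) fun e _ => (ih (t e)).image _) hsub

theorem exists_infinite_fiber' {F : ℕ → E} {S : Set E} (hS : S.Finite)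
    (hF : ∀ n, F n ∈ S) : ∃ e, {n : ℕ | F n = e}.Infinite := by
  by_contra hc
  push_neg at hc
  have hsub : (Set.univ : Set ℕ) ⊆ ⋃ e ∈ S, {n | F n = e} := fun n _ =>
    Set.mem_biUnion (hF n) rfl
  exact Set.infinite_univ (Set.Finite.subset (hS.biUnion fun e _ => hc e) hsub)

theorem alive_self (hrf : RowFinite s) {v : V}
    (h : ¬ ∃ B : List (FPath s t), Decomp s t v B ∧
      ∀ β ∈ B, ∃ α : FPath s t, α.src = v ∧ α.trg = β.trg ∧ Passes α (OnLoop s t)) :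
    Alive s t v v := by
  by_contra hc
  rw [Alive] at hc
  push_neg at hc
  obtain ⟨n, hn⟩ := hc
  have hfin := finite_fixed_length (t := t) hrf n v
  set B := hfin.toFinset.toList with hB
  have hmem : ∀ p : FPath s t, p ∈ B ↔ (p.src = v ∧ p.edges.length = n) := by
    intro p
    rw [hB, Finset.mem_toList, Set.Finite.mem_toFinset]
    rfl
  apply h
  refine ⟨B, ⟨?_, ?_, ?_⟩, ?_⟩
  · intro β hβ; exact ((hmem β).mp hβ).1
  · apply Set.Subset.antisymm
    · intro x hx
      simp only [Set.mem_iUnion] at hx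
      obtain ⟨β, hβ, hx1, -⟩ := hx
      exact hx1.trans ((hmem β).mp hβ).1
    · intro x hx
      have hxv : s (x.1 0) = v := hx
      refine Set.mem_biUnion ((hmem (prefixPath x n)).mpr ⟨hxv, by simp⟩) ⟨rfl, ?_⟩
      intro i hi
      simp only [prefixPath]
      rw [List.getElem_ofFn]
  · rw [List.pairwise_map]
    have hnd : B.Nodup := Finset.nodup_toList _
    refine List.Pairwise.imp_of_mem ?_ hnd
    intro β γ hβ hγ hne
    rw [Set.disjoint_left]
    intro x hxβ hxγ
    apply hne
    obtain ⟨hβ1, hβ2⟩ := (hmem β).mp hβ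
    obtain ⟨hγ1, hγ2⟩ := (hmem γ).mp hγ
    refine FPath.ext' (hβ1.trans hγ1.symm) ?_
    apply List.ext_getElem (by rw [hβ2, hγ2])
    intro i h1 h2
    rw [← hxβ.2 i h1, ← hxγ.2 i h2]
  · intro β hβ
    obtain ⟨h1, h2⟩ := (hmem β).mp hβ
    have := hn β h1 (le_of_eq h2.symm)
    rw [CleanAt, not_not] at this
    exact this

theorem alive_step (hrf : RowFinite s) {v w : V} (h : Alive s t v w) :
    ∃ e : E, s e = w ∧ Alive s t v (t e) := by
  have hw : ∀ n : ℕ, ∃ p : FPath s t,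
      p.src = w ∧ n + 1 ≤ p.edges.length ∧ CleanAt s t v p.trg := fun n => h (n + 1)
  choose P hP1 hP2 hP3 using hw
  have hhead : ∀ n, ∃ e rest, (P n).edges = e :: rest := by
    intro n
    rcases hp : (P n).edges with _ | ⟨e, r⟩
    · have := hP2 n; rw [hp] at this; simp at this
    · exact ⟨e, r, rfl⟩
  choose F R hFR using hhead
  have hFw : ∀ n, F n ∈ {e : E | s e = w} := fun n =>
    (hP1 n) ▸ FPath.src_tail_of_edge (P n) (F n) (R n) (hFR n)
  obtain ⟨e, he⟩ := exists_infinite_fiber' (hrf w) hFw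
  have hse : s e = w := by
    obtain ⟨m, hm⟩ := he.nonempty
    exact hm ▸ hFw m
  refine ⟨e, hse, ?_⟩
  intro n
  obtain ⟨m, hm, hlt⟩ := he.exists_gt n
  refine ⟨(P m).tail (F m) (R m) (hFR m), ?_, ?_, ?_⟩
  · show t (F m) = t e
    rw [hm]
  · show n ≤ (R m).length
    have hl := hP2 m
    rw [hFR m] at hl
    simp only [List.length_cons] at hl
    omega
  · rw [FPath.trg_tail]
    exact hP3 m

end Aux

/-- if Condition (DL) fails at a vertex `v` of a row-finite graph
without sinks, then there is an infinite path `x` starting at `v` such that for no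
`n` is there a path from `v` through a vertex on a cycle to `t(x_n)`; consequently
`M = { u : u ≥ t(x_n) for some n }` is a maximal tail (containing `v`) in which `v`
does not connect to any loop. -/
theorem stmt10 (s t : E → V) (hrf : RowFinite s) (hns : NoSinks s) (v : V)
    (h : ¬ ∃ B : List (FPath s t), Decomp s t v B ∧
      ∀ β ∈ B, ∃ α : FPath s t, α.src = v ∧ α.trg = β.trg ∧ Passes α (OnLoop s t)) :
    ∃ x : InfPath s t, s (x.1 0) = v ∧
      (∀ n : ℕ, ¬ ∃ α : FPath s t, α.src = v ∧ α.trg = t (x.1 n) ∧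
        Passes α (OnLoop s t)) ∧
      MaximalTail s t {u : V | ∃ n : ℕ, Reach s t u (t (x.1 n))} ∧
      v ∈ {u : V | ∃ n : ℕ, Reach s t u (t (x.1 n))} ∧
      ¬ ∃ c : FPath s t, IsCycle c ∧
        (∀ u : V, OnPath c u → u ∈ {u : V | ∃ n : ℕ, Reach s t u (t (x.1 n))}) ∧
        Reach s t v c.src := by
  classical
  have halive : Alive s t v v := alive_self hrf h
  have hstep : ∀ w : V, Alive s t v w → ∃ e, s e = w ∧ Alive s t v (t e) :=
    fun w hw => alive_step hrf hw
  choose f hf1 hf2 using hstep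
  let u : ℕ → {w : V // Alive s t v w} := fun n =>
    Nat.rec ⟨v, halive⟩ (fun _ p => ⟨t (f p.1 p.2), hf2 p.1 p.2⟩) n
  let x : ℕ → E := fun n => f (u n).1 (u n).2
  have hxs : ∀ n, s (x n) = (u n).1 := fun n => hf1 _ _
  have hxu : ∀ n, (u (n + 1)).1 = t (x n) := fun n => rfl
  have hinf : IsInfPath s t x := fun i => ((hxs (i + 1)).trans (hxu i)).symm
  have hclean : ∀ n, CleanAt s t v (t (x n)) := fun n => by
    rw [← hxu n]
    exact (u (n + 1)).2.cleanAt
  have hx0 : s (x 0) = v := hxs 0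
  have hchain : ∀ n k : ℕ, Reach s t (t (x n)) (t (x (n + k))) := by
    intro n k
    induction k with
    | zero => exact Reach.refl' s t _
    | succ k ih => exact ih.trans' (reach_of_edge (hinf (n + k)).symm)
  have hmono : ∀ n m : ℕ, n ≤ m → Reach s t (t (x n)) (t (x m)) := by
    intro n m hnm
    obtain ⟨k, rfl⟩ := Nat.exists_eq_add_of_le hnm
    exact hchain n k
  have hvM : v ∈ {u : V | ∃ n : ℕ, Reach s t u (t (x n))} :=
    ⟨0, reach_of_edge hx0⟩
  refine ⟨⟨x, hinf⟩, hx0, fun n => hclean n, ⟨⟨v, hvM⟩, ?_, ?_, ?_⟩, hvM, ?_⟩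
  · rintro a b hab ⟨n, hb⟩
    exact ⟨n, hab.trans' hb⟩
  · rintro a ⟨n, ha⟩ -
    rcases reach_cases ha with rfl | ⟨e, he1, he2⟩
    · exact ⟨x (n + 1), (hinf n).symm, n + 1, Reach.refl' s t _⟩
    · exact ⟨e, he1, n, he2⟩
  · rintro a ⟨n, ha⟩ b ⟨m, hb⟩
    exact ⟨t (x (max n m)), ⟨max n m, Reach.refl' s t _⟩,
      ha.trans' (hmono n _ (le_max_left n m)),
      hb.trans' (hmono m _ (le_max_right n m))⟩
  · rintro ⟨c, hc, hcM, hreach⟩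
    obtain ⟨n, q, hq1, hq2⟩ := hcM c.src (Or.inl rfl)
    obtain ⟨p, hp1, hp2⟩ := hreach
    refine hclean n ⟨FPath.comp p q (hp2.trans hq1.symm), hp1, by simp [hq2],
      c.src, ⟨c, hc, Or.inl rfl⟩, ?_⟩
    exact FPath.onPath_comp_left q _ (hp2 ▸ FPath.trg_onPath p)
end
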